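/- arXiv:1809.00869 — 3 statements merged into one kernel-verified Lean document; each statement's English description precedes it below -/
import Mathlib

section
/- The map q(z,w) = [[w̄, -z̄w̄],[-z̄w̄, z̄²w̄]] (a complex bilinear form on ℝ² given by this symmetric matrix) satisfies the SL(2,ℝ)-equivariance: for Ψ ∈ SL(2,ℝ) acting by Ψ·(z,w) = ((az+b)/(cz+d), (cz+d)²w), one has q(Ψ(z,w))(v₁,v₂) = q(z,w)(Ψ⁻¹v₁, Ψ⁻¹v₂) for all v₁, v₂ ∈ ℝ². -/
open Complex Matrix

/-- The symmetric complex bilinear form on `ℝ²` with matrix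
`[[w̄, -z̄w̄],[-z̄w̄, z̄²w̄]]`, evaluated on the pair `(v₁, v₂)`. -/
noncomputable def qform (z w : ℂ) (v₁ v₂ : Fin 2 → ℝ) : ℂ :=
  (starRingEnd ℂ) w * (v₁ 0 : ℂ) * (v₂ 0 : ℂ)
    + (-(starRingEnd ℂ) z * (starRingEnd ℂ) w) *
        ((v₁ 0 : ℂ) * (v₂ 1 : ℂ) + (v₁ 1 : ℂ) * (v₂ 0 : ℂ))
    + ((starRingEnd ℂ) z) ^ 2 * (starRingEnd ℂ) w * (v₁ 1 : ℂ) * (v₂ 1 : ℂ)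

/-!
The form factors as `q(z,w)(v₁,v₂) = w̄ · ℓ_{z̄}(v₁) · ℓ_{z̄}(v₂)` with `ℓ_ζ(v) = v₀ - ζ v₁`, so
equivariance reduces to one identity for the linear form:
`ℓ_ζ(Ψ⁻¹v) = (cζ + d) · ℓ_{Ψζ}(v)`, applied at `ζ = z̄`, where `Ψ z̄ = conj (Ψ z)`.
The two factors `cz̄ + d` combine into the conjugate of the weight `(cz + d)²`.
-/

def linFormAt (ζ : ℂ) (v : Fin 2 → ℝ) : ℂ := (v 0 : ℂ) - ζ * (v 1 : ℂ)

theorem qform_eq_mul_linFormAt (z w : ℂ) (v₁ v₂ : Fin 2 → ℝ) :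
    qform z w v₁ v₂ =
      starRingEnd ℂ w * linFormAt (starRingEnd ℂ z) v₁ * linFormAt (starRingEnd ℂ z) v₂ := by
  simp only [qform, linFormAt]
  ring

theorem linFormAt_adjugate_mulVec (a b c d : ℝ) {ζ : ℂ} (hζ : (c : ℂ) * ζ + d ≠ 0)
    (v : Fin 2 → ℝ) :
    linFormAt ζ (!![d, -b; -c, a] *ᵥ v) =
      ((c : ℂ) * ζ + d) * linFormAt ((a * ζ + b) / (c * ζ + d)) v := by
  rw [linFormAt, linFormAt, div_mul_eq_mul_div, mul_sub, mul_div_cancel₀ _ hζ]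
  simp only [mulVec, dotProduct, Fin.sum_univ_two, of_apply, cons_val', cons_val_zero,
    cons_val_one, empty_val', cons_val_fin_one, ofReal_add, ofReal_mul, ofReal_neg]
  ring

theorem inv_fin_two_of_det_eq_one {a b c d : ℝ} (h : a * d - b * c = 1) :
    (!![a, b; c, d])⁻¹ = !![d, -b; -c, a] := by
  rw [Matrix.inv_def, adjugate_fin_two_of, det_fin_two_of, h, Ring.inverse_one, one_smul]

theorem ofReal_mul_add_ofReal_ne_zero {a b c d : ℝ} (h : a * d - b * c = 1) {z : ℂ}
    (hz : z.im ≠ 0) : (c : ℂ) * z + d ≠ 0 := by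
  have hcd : ![c, d] ≠ 0 := by
    intro hcd
    have hc : c = 0 := congrFun hcd 0
    have hd : d = 0 := congrFun hcd 1
    simp [hc, hd] at h
  simpa using UpperHalfPlane.linear_ne_zero_of_im hz hcd

/-- `SL(2,ℝ)`-equivariance of `q`: for `Ψ = [[a,b],[c,d]]` with determinant one acting by
`Ψ·(z,w) = ((az+b)/(cz+d), (cz+d)²·w)`, one has
`q(Ψ(z,w))(v₁,v₂) = q(z,w)(Ψ⁻¹v₁, Ψ⁻¹v₂)`. -/
theorem stmt_7 (a b c d : ℝ) (h : a * d - b * c = 1) (z w : ℂ) (hz : 0 < z.im)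
    (v₁ v₂ : Fin 2 → ℝ) :
    qform (((a : ℂ) * z + (b : ℂ)) / ((c : ℂ) * z + (d : ℂ)))
        (((c : ℂ) * z + (d : ℂ)) ^ 2 * w) v₁ v₂ =
      qform z w ((!![a, b; c, d])⁻¹.mulVec v₁) ((!![a, b; c, d])⁻¹.mulVec v₂) := by
  have hz' : (starRingEnd ℂ z).im ≠ 0 := by simpa using hz.ne'
  have hden := ofReal_mul_add_ofReal_ne_zero h hz'
  have hconj : starRingEnd ℂ ((a * z + b) / (c * z + d)) =
      (a * starRingEnd ℂ z + b) / (c * starRingEnd ℂ z + d) := by simp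
  rw [inv_fin_two_of_det_eq_one h, qform_eq_mul_linFormAt, qform_eq_mul_linFormAt,
    linFormAt_adjugate_mulVec a b c d hden, linFormAt_adjugate_mulVec a b c d hden, hconj]
  simp only [map_mul, map_pow, map_add, conj_ofReal]
  ring
end

section
/- For every z ∈ H and w ∈ ℂ, the bilinear form q(z,w) with matrix [[w̄, -z̄w̄],[-z̄w̄, z̄²w̄]] is complex bilinear with respect to the complex structure j(z): q(z,w)(j(z)v₁, v₂) = i·q(z,w)(v₁, v₂) for all v₁, v₂ ∈ ℝ². -/
/-!
The form has rank one: `q(z,w)(v₁, v₂) = w̄ · ℓ_z(v₁) · ℓ_z(v₂)` with `ℓ_z(v) = v₀ - z̄ v₁`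
(`jCoord`), and the real-linear map `ℓ_z : ℝ² → ℂ` intertwines `j(z)` with multiplication by `i`.
-/

open Complex Matrix

/-- The map `j` from the upper half plane to 2×2 real matrices. -/
noncomputable def jmap (z : ℂ) : Matrix (Fin 2) (Fin 2) ℝ :=
  !![z.re / z.im, -(z.re ^ 2 + z.im ^ 2) / z.im; 1 / z.im, -z.re / z.im]

noncomputable def jCoord (z : ℂ) (v : Fin 2 → ℝ) : ℂ :=
  v 0 - (starRingEnd ℂ) z * v 1

theorem qform_eq_mul_jCoord (z w : ℂ) (v₁ v₂ : Fin 2 → ℝ) :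
    qform z w v₁ v₂ = (starRingEnd ℂ) w * jCoord z v₁ * jCoord z v₂ := by
  simp only [qform, jCoord]
  ring

theorem jCoord_jmap_mulVec {z : ℂ} (hz : z.im ≠ 0) (v : Fin 2 → ℝ) :
    jCoord z (jmap z *ᵥ v) = I * jCoord z v := by
  have hconj : (starRingEnd ℂ) z = z.re - z.im * I := by
    simp [Complex.ext_iff]
  have him : (z.im : ℂ) ≠ 0 := ofReal_ne_zero.mpr hz
  simp only [jCoord, jmap, mulVec, dotProduct, Fin.sum_univ_two, of_apply, cons_val',
    cons_val_zero, cons_val_one, empty_val', cons_val_fin_one, hconj]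
  push_cast
  field_simp
  linear_combination -(z.im ^ 2 * v 1) * I_sq

/-- The form `q(z,w)` is complex bilinear with respect to `j(z)`:
`q(z,w)(j(z)v₁, v₂) = i·q(z,w)(v₁,v₂)`. -/
theorem stmt_8 (z w : ℂ) (hz : 0 < z.im) (v₁ v₂ : Fin 2 → ℝ) :
    qform z w ((jmap z).mulVec v₁) v₂ = Complex.I * qform z w v₁ v₂ := by
  rw [qform_eq_mul_jCoord, qform_eq_mul_jCoord, jCoord_jmap_mulVec hz.ne']
  ring
end

section
/- Let (M, g, I₁, I₂, I₃) be a hyperkähler manifold, G a Lie group acting freely on M by hyperkähler isometries with hyperkähler moment map μ = (μ₁, μ₂, μ₃) : M → ℝ³ ⊗ g*. Then 0 is a regular value of μ: at every x with μ(x) = 0 the differential dμ(x) : T_xM → ℝ³ ⊗ g* is surjective. -/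
/-!
Since `L` is injective, `(a, ξ) ↦ ⟪L a, L ξ⟫` is a nondegenerate form on the finite-dimensional
space `G`, so every functional `ηᵢ` is `⟪L aᵢ, L ·⟫` for some `aᵢ`. The vector
`v = I₁ (L a₁) + I₂ (L a₂) + I₃ (L a₃)` is then a preimage: the diagonal terms give `ηᵢ` because
each `Iᵢ` is orthogonal, and the cross terms `⟪Iᵢ (L ξ), Iⱼ (L aⱼ)⟫` equal `±⟪L ξ, Iₖ (L aⱼ)⟫`
by the quaternion relations, which vanish because every `ωₖ` vanishes on the image of `L`.
-/

open RealInnerProductSpace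

theorem exists_inner_map_eq_of_injective {V G : Type*}
    [NormedAddCommGroup V] [InnerProductSpace ℝ V]
    [AddCommGroup G] [Module ℝ G] [FiniteDimensional ℝ G]
    (L : G →ₗ[ℝ] V) (hL : Function.Injective L) (η : G →ₗ[ℝ] ℝ) :
    ∃ a : G, ∀ ξ : G, ⟪L a, L ξ⟫ = η ξ := by
  set B : LinearMap.BilinForm ℝ G := (innerₗ V).compl₁₂ L L
  have hanisotropic : ∀ a, B a a = 0 → a = 0 := fun a ha => hL <| by
    rwa [map_zero, ← inner_self_eq_zero (𝕜 := ℝ)]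
  have hB : B.Nondegenerate :=
    ⟨fun a ha => hanisotropic a (ha a), fun a ha => hanisotropic a (ha a)⟩
  obtain ⟨a, ha⟩ := (B.toDual hB).surjective η
  exact ⟨a, fun ξ => by rw [← ha, LinearMap.BilinForm.toDual_def]; rfl⟩

section ComplexStructures

variable {V : Type*} [NormedAddCommGroup V] [InnerProductSpace ℝ V]

theorem inner_map_eq_neg_inner_map_of_isometry {A : V →ₗ[ℝ] V}
    (hiso : ∀ v w : V, ⟪A v, A w⟫ = ⟪v, w⟫) (hsq : ∀ v : V, A (A v) = -v) (v w : V) :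
    ⟪A v, w⟫ = -⟪v, A w⟫ := by
  rw [← hiso, hsq, inner_neg_left]

theorem inner_map_add_map_add_map {A B C : V →ₗ[ℝ] V}
    (hA : ∀ v w : V, ⟪A v, w⟫ = -⟪v, A w⟫) (hsq : ∀ v : V, A (A v) = -v)
    (hC : ∀ v w : V, ⟪C v, w⟫ = -⟪v, C w⟫)
    (hAB : ∀ v : V, A (B v) = C v) (hCA : ∀ v : V, C (A v) = B v)
    {x y z w : V} (hz : ⟪C z, x⟫ = 0) (hw : ⟪B x, w⟫ = 0) :
    ⟪A x, A y + B z + C w⟫ = ⟪x, y⟫ := by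
  have hAy : ⟪A x, A y⟫ = ⟪x, y⟫ := by rw [hA, hsq, inner_neg_right, neg_neg]
  have hBz : ⟪A x, B z⟫ = 0 := by rw [hA, hAB, real_inner_comm, hz, neg_zero]
  have hCw : ⟪A x, C w⟫ = 0 := by rw [real_inner_comm, hC, hCA, real_inner_comm, hw, neg_zero]
  rw [inner_add_right, inner_add_right, hAy, hBz, hCw, add_zero, add_zero]

end ComplexStructures

/-- Pointwise (linearized) version of the statement that `0` is a regular value of a
hyperkähler moment map. `V` plays the role of the tangent space `T_xM` at a point `x` of
the zero set, `G` the Lie algebra of the group, and `L` the infinitesimal action; the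
hypothesis `horth` encodes equivariance of the moment map together with `μ(x) = 0`
(namely `ωᵢ(Lξ, Lη) = ⟨μᵢ(x), [η,ξ]⟩ = 0`). The conclusion is surjectivity of
`dμ(x) : v ↦ (ξ ↦ ⟨Iᵢ(Lξ), v⟩)ᵢ`. -/
theorem stmt_12_general {V G : Type*}
    [NormedAddCommGroup V] [InnerProductSpace ℝ V]
    [NormedAddCommGroup G] [InnerProductSpace ℝ G] [FiniteDimensional ℝ G]
    (I₁ I₂ I₃ : V →ₗ[ℝ] V)
    (hiso₁ : ∀ v w : V, ⟪I₁ v, I₁ w⟫ = ⟪v, w⟫)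
    (hiso₂ : ∀ v w : V, ⟪I₂ v, I₂ w⟫ = ⟪v, w⟫)
    (hiso₃ : ∀ v w : V, ⟪I₃ v, I₃ w⟫ = ⟪v, w⟫)
    (hsq₁ : ∀ v : V, I₁ (I₁ v) = -v)
    (hsq₂ : ∀ v : V, I₂ (I₂ v) = -v)
    (hsq₃ : ∀ v : V, I₃ (I₃ v) = -v)
    (hq₁ : ∀ v : V, I₁ (I₂ v) = I₃ v)
    (hq₂ : ∀ v : V, I₂ (I₃ v) = I₁ v)
    (hq₃ : ∀ v : V, I₃ (I₁ v) = I₂ v)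
    (L : G →ₗ[ℝ] V) (hL : Function.Injective L)
    (horth : ∀ ξ η : G,
      ⟪I₁ (L ξ), L η⟫ = 0 ∧ ⟪I₂ (L ξ), L η⟫ = 0 ∧ ⟪I₃ (L ξ), L η⟫ = 0) :
    ∀ η₁ η₂ η₃ : G →ₗ[ℝ] ℝ, ∃ v : V, ∀ ξ : G,
      ⟪I₁ (L ξ), v⟫ = η₁ ξ ∧ ⟪I₂ (L ξ), v⟫ = η₂ ξ ∧ ⟪I₃ (L ξ), v⟫ = η₃ ξ := by
  intro η₁ η₂ η₃
  obtain ⟨a₁, ha₁⟩ := exists_inner_map_eq_of_injective L hL η₁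
  obtain ⟨a₂, ha₂⟩ := exists_inner_map_eq_of_injective L hL η₂
  obtain ⟨a₃, ha₃⟩ := exists_inner_map_eq_of_injective L hL η₃
  have hskew₁ := inner_map_eq_neg_inner_map_of_isometry hiso₁ hsq₁
  have hskew₂ := inner_map_eq_neg_inner_map_of_isometry hiso₂ hsq₂
  have hskew₃ := inner_map_eq_neg_inner_map_of_isometry hiso₃ hsq₃
  refine ⟨I₁ (L a₁) + I₂ (L a₂) + I₃ (L a₃), fun ξ => ⟨?_, ?_, ?_⟩⟩
  · rw [inner_map_add_map_add_map hskew₁ hsq₁ hskew₃ hq₁ hq₃ (horth a₂ ξ).2.2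
      (horth ξ a₃).2.1, real_inner_comm, ha₁]
  · rw [show I₁ (L a₁) + I₂ (L a₂) + I₃ (L a₃) = I₂ (L a₂) + I₃ (L a₃) + I₁ (L a₁) by abel,
      inner_map_add_map_add_map hskew₂ hsq₂ hskew₁ hq₂ hq₁ (horth a₃ ξ).1
      (horth ξ a₁).2.2, real_inner_comm, ha₂]
  · rw [show I₁ (L a₁) + I₂ (L a₂) + I₃ (L a₃) = I₃ (L a₃) + I₁ (L a₁) + I₂ (L a₂) by abel,
      inner_map_add_map_add_map hskew₃ hsq₃ hskew₂ hq₃ hq₂ (horth a₁ ξ).2.1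
      (horth ξ a₂).1, real_inner_comm, ha₃]

/-- Pointwise (linearized) version of the statement that `0` is a regular value of a
hyperkähler moment map. `V` plays the role of the tangent space `T_xM` at a point `x` of
the zero set, `G` the Lie algebra of the group; `I₁, I₂, I₃` are the three complex
structures (orthogonal, squaring to `-1`, satisfying the quaternion relations);
`L : G → V` is the (injective, since the action is free) infinitesimal action; the
hypothesis `horth` encodes equivariance of the moment map together with `μ(x) = 0`
(namely `ωᵢ(Lξ, Lη) = ⟨μᵢ(x), [η,ξ]⟩ = 0`). The conclusion is surjectivity of the
differential `dμ(x) : T_xM → ℝ³ ⊗ g*`, `v ↦ (ξ ↦ ⟨Iᵢ(Lξ), v⟩)ᵢ`. -/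
theorem stmt_12 {V G : Type*}
    [NormedAddCommGroup V] [InnerProductSpace ℝ V] [FiniteDimensional ℝ V]
    [NormedAddCommGroup G] [InnerProductSpace ℝ G] [FiniteDimensional ℝ G]
    (I₁ I₂ I₃ : V →ₗ[ℝ] V)
    (hiso₁ : ∀ v w : V, ⟪I₁ v, I₁ w⟫ = ⟪v, w⟫)
    (hiso₂ : ∀ v w : V, ⟪I₂ v, I₂ w⟫ = ⟪v, w⟫)
    (hiso₃ : ∀ v w : V, ⟪I₃ v, I₃ w⟫ = ⟪v, w⟫)
    (hsq₁ : ∀ v : V, I₁ (I₁ v) = -v)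
    (hsq₂ : ∀ v : V, I₂ (I₂ v) = -v)
    (hsq₃ : ∀ v : V, I₃ (I₃ v) = -v)
    (hq₁ : ∀ v : V, I₁ (I₂ v) = I₃ v)
    (hq₂ : ∀ v : V, I₂ (I₃ v) = I₁ v)
    (hq₃ : ∀ v : V, I₃ (I₁ v) = I₂ v)
    (L : G →ₗ[ℝ] V) (hL : Function.Injective L)
    (horth : ∀ ξ η : G,
      ⟪I₁ (L ξ), L η⟫ = 0 ∧ ⟪I₂ (L ξ), L η⟫ = 0 ∧ ⟪I₃ (L ξ), L η⟫ = 0) :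
    ∀ η₁ η₂ η₃ : G →ₗ[ℝ] ℝ, ∃ v : V, ∀ ξ : G,
      ⟪I₁ (L ξ), v⟫ = η₁ ξ ∧ ⟪I₂ (L ξ), v⟫ = η₂ ξ ∧ ⟪I₃ (L ξ), v⟫ = η₃ ξ :=
  stmt_12_general I₁ I₂ I₃ hiso₁ hiso₂ hiso₃ hsq₁ hsq₂ hsq₃ hq₁ hq₂ hq₃ L hL horth
end
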